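/- For any nonempty coalition Q and any player j ∉ Q, joining reduces total cost exactly when player j prefers to join: costw({j}) + costw(Q) ≥ costw(Q ∪ {j}) if and only if err_j({j}) ≥ err_j(Q ∪ {j}). -/

import Mathlib

open Finset

variable {ι : Type*}

/-- The expected error of player `j` in coalition `C`. -/
noncomputable def err [DecidableEq ι] (μ σ2 : ℝ) (n : ι → ℕ) (C : Finset ι) (j : ι) : ℝ :=
  μ / (∑ i ∈ C, (n i : ℝ)) +
    σ2 * ((∑ i ∈ C.erase j, (n i : ℝ) ^ 2) + (∑ i ∈ C.erase j, (n i : ℝ)) ^ 2) /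
      (∑ i ∈ C, (n i : ℝ)) ^ 2

/-- The weighted cost of a coalition `C`. -/
noncomputable def costw [DecidableEq ι] (μ σ2 : ℝ) (n : ι → ℕ) (C : Finset ι) : ℝ :=
  ∑ j ∈ C, (n j : ℝ) * err μ σ2 n C j

/-!
Write `S_C = ∑_{i ∈ C} n_i` and `A_C = ∑_{i ∈ C} n_i²`. For `j ∈ C`,
`err_j(C) = μ/S_C + σ²(A_C + S_C² - 2 S_C n_j)/S_C²`, so the weighted cost collapses to
`costw(C) = μ + σ²(S_C² - A_C)/S_C`. Substituting these closed forms, the gain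
`err_j({j}) - err_j(Q ∪ {j})` of `j` is the total cost saving times `S_Q/(n_j (n_j + S_Q)) > 0`,
so the two have the same sign.
-/

section

variable [DecidableEq ι] (μ σ2 : ℝ) (n : ι → ℕ)

lemma err_of_mem {C : Finset ι} {j : ι} (hj : j ∈ C) :
    err μ σ2 n C j = μ / (∑ i ∈ C, (n i : ℝ)) +
      σ2 * ((∑ i ∈ C, (n i : ℝ) ^ 2) + (∑ i ∈ C, (n i : ℝ)) ^ 2
        - 2 * (∑ i ∈ C, (n i : ℝ)) * n j) / (∑ i ∈ C, (n i : ℝ)) ^ 2 := by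
  rw [err, sum_erase_eq_sub hj, sum_erase_eq_sub hj]
  ring

lemma err_singleton (j : ι) : err μ σ2 n {j} j = μ / n j := by
  rw [err_of_mem μ σ2 n (mem_singleton_self j), sum_singleton, sum_singleton]
  ring

lemma err_insert_self {Q : Finset ι} {j : ι} (hj : j ∉ Q) :
    err μ σ2 n (insert j Q) j = μ / (n j + ∑ i ∈ Q, (n i : ℝ)) +
      σ2 * ((∑ i ∈ Q, (n i : ℝ) ^ 2) + (∑ i ∈ Q, (n i : ℝ)) ^ 2) /
        (n j + ∑ i ∈ Q, (n i : ℝ)) ^ 2 := by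
  rw [err_of_mem μ σ2 n (mem_insert_self j Q), sum_insert hj, sum_insert hj]
  ring

lemma costw_eq {C : Finset ι} (hC : ∑ i ∈ C, (n i : ℝ) ≠ 0) :
    costw μ σ2 n C = μ + σ2 * ((∑ i ∈ C, (n i : ℝ)) ^ 2 - ∑ i ∈ C, (n i : ℝ) ^ 2)
      / ∑ i ∈ C, (n i : ℝ) := by
  set S := ∑ i ∈ C, (n i : ℝ) with hS
  set A := ∑ i ∈ C, (n i : ℝ) ^ 2 with hA
  have hterm : ∀ j ∈ C, (n j : ℝ) * err μ σ2 n C j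
      = (μ / S + σ2 * (A + S ^ 2) / S ^ 2) * n j - 2 * σ2 / S * (n j : ℝ) ^ 2 := by
    intro j hj
    rw [err_of_mem μ σ2 n hj, ← hS, ← hA]
    field_simp
    ring
  rw [costw, sum_congr rfl hterm, sum_sub_distrib, ← mul_sum, ← mul_sum]
  field_simp
  ring

lemma costw_singleton {j : ι} (hj : n j ≠ 0) : costw μ σ2 n {j} = μ := by
  rw [costw_eq μ σ2 n (by simpa using hj)]
  simp

lemma err_singleton_sub_err_insert {Q : Finset ι} {j : ι} (hj : j ∉ Q)
    (hnj : n j ≠ 0) (hQ : ∑ i ∈ Q, (n i : ℝ) ≠ 0) :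
    err μ σ2 n {j} j - err μ σ2 n (insert j Q) j
      = (∑ i ∈ Q, (n i : ℝ)) / (n j * (n j + ∑ i ∈ Q, (n i : ℝ))) *
        (costw μ σ2 n {j} + costw μ σ2 n Q - costw μ σ2 n (insert j Q)) := by
  have hT : (n j : ℝ) + ∑ i ∈ Q, (n i : ℝ) ≠ 0 := by positivity
  rw [err_singleton, err_insert_self μ σ2 n hj, costw_singleton μ σ2 n hnj, costw_eq μ σ2 n hQ,
    costw_eq μ σ2 n (by rwa [sum_insert hj]), sum_insert hj, sum_insert hj]
  field_simp
  ring

end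

theorem join_reduces_cost_iff_prefers_general [DecidableEq ι] (μ σ2 : ℝ) (n : ι → ℕ)
    (hn : ∀ i, 0 < n i)
    (Q : Finset ι) (hQ : Q.Nonempty) (j : ι) (hj : j ∉ Q) :
    costw μ σ2 n {j} + costw μ σ2 n Q ≥ costw μ σ2 n (insert j Q) ↔
      err μ σ2 n {j} j ≥ err μ σ2 n (insert j Q) j := by
  have hS : 0 < ∑ i ∈ Q, (n i : ℝ) := sum_pos (fun i _ => mod_cast hn i) hQ
  have hnj : (0 : ℝ) < n j := mod_cast hn j
  rw [ge_iff_le, ge_iff_le, ← sub_nonneg, ← sub_nonneg (b := err μ σ2 n (insert j Q) j),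
    err_singleton_sub_err_insert μ σ2 n hj (hn j).ne' hS.ne']
  exact (mul_nonneg_iff_of_pos_left (by positivity)).symm

/-- For any nonempty coalition `Q` and player `j ∉ Q`, joining reduces total cost
exactly when player `j` prefers to join:
`costw {j} + costw Q ≥ costw (Q ∪ {j})` iff `err_j({j}) ≥ err_j(Q ∪ {j})`. -/
theorem join_reduces_cost_iff_prefers [DecidableEq ι] (μ σ2 : ℝ) (n : ι → ℕ)
    (hμ : 0 < μ) (hσ : 0 < σ2) (hn : ∀ i, 0 < n i)
    (Q : Finset ι) (hQ : Q.Nonempty) (j : ι) (hj : j ∉ Q) :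
    costw μ σ2 n {j} + costw μ σ2 n Q ≥ costw μ σ2 n (insert j Q) ↔
      err μ σ2 n {j} j ≥ err μ σ2 n (insert j Q) j :=
  join_reduces_cost_iff_prefers_general μ σ2 n hn Q hQ j hj
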